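/- Let k > 0 and let α : [0,1] → ℝ be continuous, not identically zero, with ∫_0^1 α(y) dy = 0. Suppose ψ : [0,1] → ℝ is twice continuously differentiable with ψ(y) > 0 for all y ∈ [0,1], ψ''(y) + (k α(y) + λ)ψ(y) = 0 for all y ∈ (0,1), and ψ'(0) = ψ'(1) = 0. Then the leading-order speed correction v₁ = −λ/k satisfies 0 < v₁ < sup_{y∈[0,1]} α(y); in particular weak advection always enhances the front propagation speed but by no more than the maximal flow velocity. -/

import Mathlib

/-!
With `q = kα + λ`, the logarithmic derivative `w = ψ'/ψ` satisfies the Riccati equation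
`w' = -q - w²`. Integrating it over `[0,1]`, the Neumann conditions kill the boundary term
and, since `α` has mean zero, `λ = -∫ w²`. Moreover `ψ'` cannot vanish identically, for then
`ψ'' = 0` and the equation forces `α` to be constant, hence zero. So `λ < 0`. If `-λ/k` were
at least `sup α`, then `q ≤ 0` and `ψ'' = -qψ ≥ 0`, so `ψ'` would be monotone between its
boundary values `0` and `0`, hence zero again.
-/

open Set MeasureTheory Filter Topology

variable {a b : ℝ}

theorem exists_mem_Ioo_ne_of_integral_eq_zero {α : ℝ → ℝ} (hab : a < b)
    (hα : ContinuousOn α (Icc a b)) (hmean : ∫ y in a..b, α y = 0)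
    (hne : ∃ y ∈ Icc a b, α y ≠ 0) (c : ℝ) : ∃ y ∈ Ioo a b, α y ≠ c := by
  by_contra! hc
  have hαc : EqOn α (fun _ => c) (Icc a b) :=
    EqOn.of_subset_closure hc hα continuousOn_const Ioo_subset_Icc_self
      (closure_Ioo hab.ne).ge
  have hc0 : c = 0 := by
    rw [intervalIntegral.integral_congr (by rwa [uIcc_of_le hab.le]),
      intervalIntegral.integral_const, smul_eq_mul] at hmean
    exact (mul_eq_zero.mp hmean).resolve_left (sub_ne_zero.mpr hab.ne')
  obtain ⟨y, hy, hαy⟩ := hne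
  exact hαy (hc0 ▸ hαc hy)

section SecondOrder

variable {ψ ψ' ψ'' q : ℝ → ℝ}

theorem eq_zero_of_forall_deriv_eq_zero (hψ'' : ∀ y ∈ Ioo a b, HasDerivAt ψ' (ψ'' y) y)
    (hode : ∀ y ∈ Ioo a b, ψ'' y + q y * ψ y = 0) (hψ : ∀ y ∈ Ioo a b, ψ y ≠ 0)
    (h0 : ∀ y ∈ Ioo a b, ψ' y = 0) : ∀ y ∈ Ioo a b, q y = 0 := by
  intro y hy
  have hψ'_loc : ψ' =ᶠ[𝓝 y] fun _ => 0 := eventually_of_mem (isOpen_Ioo.mem_nhds hy) h0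
  have hψ''y : ψ'' y = 0 :=
    (hψ'' y hy).unique ((hasDerivAt_const y 0).congr_of_eventuallyEq hψ'_loc)
  have hqψ := hode y hy
  rw [hψ''y, zero_add] at hqψ
  exact (mul_eq_zero.mp hqψ).resolve_right (hψ y hy)

theorem HasDerivAt.riccati {y c ψ''y : ℝ} (hψ : HasDerivAt ψ (ψ' y) y)
    (hψ' : HasDerivAt ψ' ψ''y y) (hψy : ψ y ≠ 0) (hode : ψ''y + c * ψ y = 0) :
    HasDerivAt (fun x => ψ' x / ψ x) (-c - (ψ' y / ψ y) ^ 2) y := by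
  refine (hψ'.div hψ hψy).congr_deriv ?_
  rw [show ψ''y = -(c * ψ y) by linarith]
  field_simp

theorem integral_eq_neg_integral_sq_div_of_neumann (hab : a ≤ b)
    (hψ : ContinuousOn ψ (Icc a b)) (hψ' : ContinuousOn ψ' (Icc a b))
    (hψ0 : ∀ y ∈ Icc a b, ψ y ≠ 0)
    (hdψ : ∀ y ∈ Ioo a b, HasDerivAt ψ (ψ' y) y)
    (hdψ' : ∀ y ∈ Ioo a b, HasDerivAt ψ' (ψ'' y) y)
    (hode : ∀ y ∈ Ioo a b, ψ'' y + q y * ψ y = 0) (hq : IntervalIntegrable q volume a b)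
    (ha : ψ' a = 0) (hb : ψ' b = 0) :
    ∫ y in a..b, q y = -∫ y in a..b, (ψ' y / ψ y) ^ 2 := by
  have hw : ContinuousOn (fun y => ψ' y / ψ y) (Icc a b) := hψ'.div hψ hψ0
  have hw2 : IntervalIntegrable (fun y => (ψ' y / ψ y) ^ 2) volume a b :=
    ((hw.pow 2).mono (uIcc_of_le hab).subset).intervalIntegrable
  have hFTC : ∫ y in a..b, (-q y - (ψ' y / ψ y) ^ 2) = ψ' b / ψ b - ψ' a / ψ a :=
    intervalIntegral.integral_eq_sub_of_hasDeriv_right_of_le hab hw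
      (fun y hy => ((hdψ y hy).riccati (hdψ' y hy) (hψ0 y (Ioo_subset_Icc_self hy))
        (hode y hy)).hasDerivWithinAt)
      (hq.neg.sub hw2)
  rw [intervalIntegral.integral_sub (f := fun y => -q y) hq.neg hw2,
    intervalIntegral.integral_neg, ha, hb, zero_div, zero_div, sub_self] at hFTC
  linarith

theorem eq_zero_of_deriv_nonneg_of_neumann (hψ' : ContinuousOn ψ' (Icc a b))
    (hdψ' : ∀ y ∈ Ioo a b, HasDerivAt ψ' (ψ'' y) y) (hψ'' : ∀ y ∈ Ioo a b, 0 ≤ ψ'' y)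
    (ha : ψ' a = 0) (hb : ψ' b = 0) : ∀ y ∈ Icc a b, ψ' y = 0 := by
  have hmono : MonotoneOn ψ' (Icc a b) := by
    refine monotoneOn_of_hasDerivWithinAt_nonneg (f' := ψ'') (convex_Icc a b) hψ' ?_ ?_ <;>
      rw [interior_Icc]
    · exact fun y hy => (hdψ' y hy).hasDerivWithinAt
    · exact hψ''
  intro y hy
  have hya := hmono (left_mem_Icc.mpr (hy.1.trans hy.2)) hy hy.1
  have hyb := hmono hy (right_mem_Icc.mpr (hy.1.trans hy.2)) hy.2
  linarith

theorem integral_neg_of_neumann (hab : a < b)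
    (hψ : ContinuousOn ψ (Icc a b)) (hψ' : ContinuousOn ψ' (Icc a b))
    (hψ0 : ∀ y ∈ Icc a b, ψ y ≠ 0)
    (hdψ : ∀ y ∈ Ioo a b, HasDerivAt ψ (ψ' y) y)
    (hdψ' : ∀ y ∈ Ioo a b, HasDerivAt ψ' (ψ'' y) y)
    (hode : ∀ y ∈ Ioo a b, ψ'' y + q y * ψ y = 0) (hq : IntervalIntegrable q volume a b)
    (ha : ψ' a = 0) (hb : ψ' b = 0) (hne : ∃ y ∈ Ioo a b, ψ' y ≠ 0) :
    ∫ y in a..b, q y < 0 := by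
  obtain ⟨y₀, hy₀, hψ'y₀⟩ := hne
  rw [integral_eq_neg_integral_sq_div_of_neumann hab.le hψ hψ' hψ0 hdψ hdψ' hode hq ha hb,
    neg_lt_zero]
  exact intervalIntegral.integral_pos hab ((hψ'.div hψ hψ0).pow 2) (fun _ _ => sq_nonneg _)
    ⟨y₀, Ioo_subset_Icc_self hy₀,
      pow_two_pos_of_ne_zero (div_ne_zero hψ'y₀ (hψ0 y₀ (Ioo_subset_Icc_self hy₀)))⟩

theorem exists_pos_of_neumann (hψ' : ContinuousOn ψ' (Icc a b))
    (hdψ' : ∀ y ∈ Ioo a b, HasDerivAt ψ' (ψ'' y) y)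
    (hode : ∀ y ∈ Ioo a b, ψ'' y + q y * ψ y = 0) (hψ : ∀ y ∈ Ioo a b, 0 < ψ y)
    (ha : ψ' a = 0) (hb : ψ' b = 0) (hne : ∃ y ∈ Ioo a b, ψ' y ≠ 0) :
    ∃ y ∈ Ioo a b, 0 < q y := by
  by_contra! hq
  have hψ'' : ∀ y ∈ Ioo a b, 0 ≤ ψ'' y := fun y hy => by
    nlinarith [hode y hy, hq y hy, hψ y hy]
  obtain ⟨y₀, hy₀, hψ'y₀⟩ := hne
  exact hψ'y₀ (eq_zero_of_deriv_nonneg_of_neumann hψ' hdψ' hψ'' ha hb y₀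
    (Ioo_subset_Icc_self hy₀))

end SecondOrder

theorem stmt_3_general (k lam : ℝ) (hk : 0 < k) (α ψ ψ' ψ'' : ℝ → ℝ)
    (hαcont : ContinuousOn α (Icc 0 1))
    (hαnontriv : ∃ y ∈ Icc (0:ℝ) 1, α y ≠ 0)
    (hαmean : (∫ y in (0:ℝ)..1, α y) = 0)
    (hψ' : ∀ y ∈ Icc (0:ℝ) 1, HasDerivWithinAt ψ (ψ' y) (Icc 0 1) y)
    (hψ'' : ∀ y ∈ Icc (0:ℝ) 1, HasDerivWithinAt ψ' (ψ'' y) (Icc 0 1) y)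
    (hψpos : ∀ y ∈ Icc (0:ℝ) 1, 0 < ψ y)
    (hode : ∀ y ∈ Ioo (0:ℝ) 1, ψ'' y + (k * α y + lam) * ψ y = 0)
    (hbc0 : ψ' 0 = 0) (hbc1 : ψ' 1 = 0) :
    0 < -lam / k ∧ -lam / k < sSup (α '' Icc 0 1) := by
  have hI : Ioo (0:ℝ) 1 ⊆ Icc 0 1 := Ioo_subset_Icc_self
  have hψ0 : ∀ y ∈ Icc (0:ℝ) 1, ψ y ≠ 0 := fun y hy => (hψpos y hy).ne'
  have hψc : ContinuousOn ψ (Icc 0 1) := fun y hy => (hψ' y hy).continuousWithinAt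
  have hψ'c : ContinuousOn ψ' (Icc 0 1) := fun y hy => (hψ'' y hy).continuousWithinAt
  have hdψ : ∀ y ∈ Ioo (0:ℝ) 1, HasDerivAt ψ (ψ' y) y :=
    fun y hy => (hψ' y (hI hy)).hasDerivAt (Icc_mem_nhds hy.1 hy.2)
  have hdψ' : ∀ y ∈ Ioo (0:ℝ) 1, HasDerivAt ψ' (ψ'' y) y :=
    fun y hy => (hψ'' y (hI hy)).hasDerivAt (Icc_mem_nhds hy.1 hy.2)
  obtain ⟨y₀, hy₀, hψ'y₀⟩ : ∃ y ∈ Ioo (0:ℝ) 1, ψ' y ≠ 0 := by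
    obtain ⟨y, hy, hαy⟩ :=
      exists_mem_Ioo_ne_of_integral_eq_zero one_pos hαcont hαmean hαnontriv (-lam / k)
    by_contra! hψ'0
    have hq := eq_zero_of_forall_deriv_eq_zero hdψ' hode (fun y hy => hψ0 y (hI hy)) hψ'0 y hy
    exact hαy (by field_simp; linarith)
  have hlam : lam < 0 := by
    have hαi : IntervalIntegrable α volume 0 1 :=
      (hαcont.mono (uIcc_of_le zero_le_one).subset).intervalIntegrable
    have hq := integral_neg_of_neumann one_pos hψc hψ'c hψ0 hdψ hdψ' hode
      ((hαi.const_mul k).add intervalIntegrable_const) hbc0 hbc1 ⟨y₀, hy₀, hψ'y₀⟩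
    rwa [intervalIntegral.integral_add (hαi.const_mul k) intervalIntegrable_const,
      intervalIntegral.integral_const_mul, hαmean, intervalIntegral.integral_const, mul_zero,
      zero_add, sub_zero, one_smul] at hq
  obtain ⟨y, hy, hqy⟩ := exists_pos_of_neumann hψ'c hdψ' hode (fun y hy => hψpos y (hI hy))
    hbc0 hbc1 ⟨y₀, hy₀, hψ'y₀⟩
  refine ⟨div_pos (neg_pos.mpr hlam) hk, ?_⟩
  calc -lam / k < α y := by rw [div_lt_iff₀ hk]; linarith
    _ ≤ sSup (α '' Icc 0 1) := le_csSup (isCompact_Icc.image_of_continuousOn hαcont).bddAbove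
      (mem_image_of_mem α (hI hy))

/-- For the principal (positive-eigenfunction) solution of the Sturm–Liouville problem
`ψ'' + (kα(y) + λ)ψ = 0` with Neumann boundary conditions, where `α` is a nontrivial
continuous zero-mean shear profile, the leading-order speed correction `v₁ = −λ/k`
satisfies `0 < v₁ < sup_{y∈[0,1]} α(y)`. -/
theorem stmt_3 (k lam : ℝ) (hk : 0 < k) (α ψ ψ' ψ'' : ℝ → ℝ)
    (hαcont : ContinuousOn α (Icc 0 1))
    (hαnontriv : ∃ y ∈ Icc (0:ℝ) 1, α y ≠ 0)
    (hαmean : (∫ y in (0:ℝ)..1, α y) = 0)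
    (hψ' : ∀ y ∈ Icc (0:ℝ) 1, HasDerivWithinAt ψ (ψ' y) (Icc 0 1) y)
    (hψ'' : ∀ y ∈ Icc (0:ℝ) 1, HasDerivWithinAt ψ' (ψ'' y) (Icc 0 1) y)
    (hψ''cont : ContinuousOn ψ'' (Icc 0 1))
    (hψpos : ∀ y ∈ Icc (0:ℝ) 1, 0 < ψ y)
    (hode : ∀ y ∈ Ioo (0:ℝ) 1, ψ'' y + (k * α y + lam) * ψ y = 0)
    (hbc0 : ψ' 0 = 0) (hbc1 : ψ' 1 = 0) :
    0 < -lam / k ∧ -lam / k < sSup (α '' Icc 0 1) :=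
  stmt_3_general k lam hk α ψ ψ' ψ'' hαcont hαnontriv hαmean hψ' hψ'' hψpos hode hbc0 hbc1
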